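/- Let (Z_t) be the generation sizes of the unimodular Galton–Watson process with offspring distributions supported on {k_min−1, ..., k_max−1} after the first generation (k_min ≥ 2) and mean a > 1. Then there exist constants c₀, c₁ > 0 such that for every s ≥ k_max + 1, P(Z_k ≤ a^k · s for all k ∈ ℕ) ≥ 1 − c₀ · exp(−c₁ s). -/

import Mathlib

/-!
Fix `ρ` with `ρ < 1 < ρ² a`, and call the step from generation `k` to `k + 1` bad if `Z_k ≤ a^k s`
but `Z_{k+1}` exceeds its conditional mean `a Z_k` by more than `δ ρ^(k-1) a^(k+1) s`, where
`δ = (1 - ρ) / (k_max + 1)`. If `Z_1 ≤ k_max` and no step is bad, induction gives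
`Z_k ≤ a^(k-1) k_max + a^k s ∑_{j < k-1} δ ρ^j ≤ a^k s`, using `s ≥ k_max + 1`.
Given `Z_k = n ≤ a^k s`, the next generation is a sum of `n` independent offspring numbers in
`[0, k_max]`, independent of `Z_k`, so by Hoeffding's inequality the `k`-th step is bad with
probability at most `exp (-c s (ρ² a)^(k-1))`. As `ρ² a > 1`, these bounds sum to `O (exp (-c s))`.
-/

open MeasureTheory ProbabilityTheory

open scoped ENNReal

lemma PMF.ae_le_of_apply_eq_zero {p : PMF ℕ} {c : ℕ} (hp : ∀ m, c < m → p m = 0) :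
    ∀ᵐ m ∂p.toMeasure, m ≤ c := by
  rw [ae_iff, PMF.toMeasure_apply_eq_zero_iff _ MeasurableSet.of_discrete]
  exact Set.disjoint_left.2 fun m hm hc => (PMF.mem_support_iff _ _).1 hm (hp m (not_le.1 hc))

lemma PMF.integral_natCast_eq_tsum {p : PMF ℕ} {c : ℕ} (hp : ∀ m, c < m → p m = 0) :
    ∫ m, (m : ℝ) ∂p.toMeasure = ∑' m : ℕ, (m : ℝ) * (p m).toReal := by
  have hint : Integrable (fun m : ℕ => (m : ℝ)) p.toMeasure := by
    refine Integrable.of_mem_Icc 0 c Measurable.of_discrete.aemeasurable ?_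
    filter_upwards [PMF.ae_le_of_apply_eq_zero hp] with m hm
    exact ⟨m.cast_nonneg, by exact_mod_cast hm⟩
  rw [PMF.integral_eq_tsum _ _ hint]
  simp only [smul_eq_mul, mul_comm]

lemma PMF.apply_eq_zero_of_sizeBiased {P Pbar : PMF ℕ} {b : ℝ}
    (hPbar : ∀ k : ℕ, (Pbar k).toReal = ((k : ℝ) + 1) * (P (k + 1)).toReal / b) {c : ℕ}
    (hP : ∀ m, c < m → P m = 0) (m : ℕ) (hm : c < m) : Pbar m = 0 := by
  have h := hPbar m
  rw [hP (m + 1) (by omega), ENNReal.toReal_zero, mul_zero, zero_div,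
    ENNReal.toReal_eq_zero_iff] at h
  exact h.resolve_right (PMF.apply_ne_top _ _)

section

variable {Ω : Type*} [MeasurableSpace Ω] {μ : Measure Ω}

lemma ae_le_of_map_eq_toMeasure {X : Ω → ℕ} (hX : Measurable X) {p : PMF ℕ}
    (hlaw : μ.map X = p.toMeasure) {c : ℕ} (hp : ∀ m, c < m → p m = 0) :
    ∀ᵐ ω ∂μ, X ω ≤ c :=
  ae_of_ae_map hX.aemeasurable (hlaw ▸ PMF.ae_le_of_apply_eq_zero hp)

lemma measureReal_sum_range_ge_le [IsProbabilityMeasure μ] {X : ℕ → Ω → ℕ}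
    (hX : ∀ i, Measurable (X i)) (hindep : iIndepFun X μ) {p : PMF ℕ}
    (hlaw : ∀ i, μ.map (X i) = p.toMeasure) {c : ℕ} (hp : ∀ m, c < m → p m = 0)
    {a : ℝ} (hmean : ∑' m : ℕ, (m : ℝ) * (p m).toReal = a) (n : ℕ) {ε : ℝ}
    (hε : 0 ≤ ε) :
    μ.real {ω | n * a + ε ≤ ∑ i ∈ Finset.range n, (X i ω : ℝ)}
      ≤ Real.exp (-2 * ε ^ 2 / (n * c ^ 2)) := by
  have hXint : ∀ i, μ[fun ω => (X i ω : ℝ)] = a := fun i => by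
    rw [← hmean, ← PMF.integral_natCast_eq_tsum hp, ← hlaw i,
      integral_map (hX i).aemeasurable Measurable.of_discrete.aestronglyMeasurable]
  have hsubG : ∀ i < n, HasSubgaussianMGF (fun ω => (X i ω : ℝ) - a)
      ((‖(c : ℝ) - 0‖₊ / 2) ^ 2) μ := fun i _ => by
    rw [← hXint i]
    refine hasSubgaussianMGF_of_mem_Icc (Measurable.of_discrete.comp (hX i)).aemeasurable ?_
    filter_upwards [ae_le_of_map_eq_toMeasure (hX i) (hlaw i) hp] with ω hω
    exact ⟨(X i ω).cast_nonneg, by exact_mod_cast hω⟩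
  have hcentred : iIndepFun (fun i ω => (X i ω : ℝ) - a) μ :=
    hindep.comp (fun _ m => (m : ℝ) - a) fun _ => Measurable.of_discrete
  convert HasSubgaussianMGF.measure_sum_range_ge_le_of_iIndepFun hcentred hsubG hε using 2
  · ext ω
    simp only [Set.mem_ofPred_eq, Finset.sum_sub_distrib, Finset.sum_const, Finset.card_range,
      nsmul_eq_mul]
    constructor <;> intro h <;> linarith
  · simp only [sub_zero, NNReal.coe_pow, NNReal.coe_div, coe_nnnorm, Real.norm_natCast,
      NNReal.coe_ofNat]
    ring

lemma measure_setOf_mem_fiber_le [IsProbabilityMeasure μ] {β : Type*} [Countable β]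
    [MeasurableSpace β] [MeasurableSingletonClass β] {N : Ω → β} (hN : Measurable N)
    {A : β → Set Ω} {q : ℝ≥0∞} (h : ∀ n, μ (N ⁻¹' {n} ∩ A n) ≤ μ (N ⁻¹' {n}) * q) :
    μ {ω | ω ∈ A (N ω)} ≤ q := by
  have hfib : {ω | ω ∈ A (N ω)} = ⋃ n, N ⁻¹' {n} ∩ A n := by ext ω; simp
  calc μ {ω | ω ∈ A (N ω)} ≤ ∑' n, μ (N ⁻¹' {n} ∩ A n) := hfib ▸ measure_iUnion_le _
    _ ≤ ∑' n, μ (N ⁻¹' {n}) * q := ENNReal.tsum_le_tsum h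
    _ = μ (⋃ n, N ⁻¹' {n}) * q := by
      rw [ENNReal.tsum_mul_right,
        measure_iUnion (pairwise_disjoint_fiber N) fun n => hN (measurableSet_singleton n)]
    _ = q := by simp [← Set.preimage_iUnion, Set.iUnion_of_singleton]

lemma one_sub_le_measureReal [IsProbabilityMeasure μ] {s : Set Ω} {r : ℝ} (hr : 0 ≤ r)
    (h : μ sᶜ ≤ ENNReal.ofReal r) :
    1 - r ≤ μ.real s := by
  have hsplit : 1 ≤ μ.real s + μ.real sᶜ := calc
    1 = μ.real (s ∪ sᶜ) := by simp
    _ ≤ μ.real s + μ.real sᶜ := measureReal_union_le _ _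
  linarith [ENNReal.toReal_le_of_le_ofReal hr h, measureReal_def μ sᶜ]

end

lemma le_pow_mul_of_increments_le {y δ : ℕ → ℝ} {a s K D : ℝ} (ha : 0 ≤ a) (hs : 0 ≤ s)
    (hD : ∀ m, ∑ j ∈ Finset.range m, δ j ≤ D) (hKD : K + a * s * D ≤ a * s) (h0 : y 0 ≤ K)
    (hstep : ∀ m, y m ≤ a ^ (m + 1) * s → y (m + 1) ≤ a * y m + δ m * a ^ (m + 2) * s)
    (m : ℕ) : y m ≤ a ^ (m + 1) * s := by
  have hbound :
      ∀ m, a ^ m * K + a ^ (m + 1) * s * ∑ j ∈ Finset.range m, δ j ≤ a ^ (m + 1) * s :=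
    fun m => calc
      _ ≤ a ^ m * K + a ^ (m + 1) * s * D := by gcongr; exact hD m
      _ = a ^ m * (K + a * s * D) := by ring
      _ ≤ a ^ m * (a * s) := by gcongr
      _ = a ^ (m + 1) * s := by ring
  have hinv : ∀ m, y m ≤ a ^ m * K + a ^ (m + 1) * s * ∑ j ∈ Finset.range m, δ j := by
    intro m
    induction m with
    | zero => simpa using h0
    | succ m ih =>
      calc y (m + 1) ≤ a * y m + δ m * a ^ (m + 2) * s := hstep m (ih.trans (hbound m))
        _ ≤ a * (a ^ m * K + a ^ (m + 1) * s * ∑ j ∈ Finset.range m, δ j)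
            + δ m * a ^ (m + 2) * s := by gcongr
        _ = _ := by rw [Finset.sum_range_succ]; ring
  exact (hinv m).trans (hbound m)

lemma tsum_ofReal_exp_neg_mul_pow_le {κ q s : ℝ} (hκ : 0 < κ) (hq : 1 < q) (hs : 1 ≤ s) :
    ∑' m : ℕ, ENNReal.ofReal (Real.exp (-(κ * s * q ^ m)))
      ≤ ENNReal.ofReal ((1 - Real.exp (-(κ * (q - 1))))⁻¹ * Real.exp (-(κ * s))) := by
  set r := Real.exp (-(κ * (q - 1)))
  have hr0 : 0 ≤ r := (Real.exp_pos _).le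
  have hr1 : r < 1 := Real.exp_lt_one_iff.2 (by nlinarith)
  have hterm : ∀ m : ℕ, Real.exp (-(κ * s * q ^ m)) ≤ Real.exp (-(κ * s)) * r ^ m := by
    intro m
    rw [← Real.exp_nat_mul, ← Real.exp_add, Real.exp_le_exp]
    have hbern : 1 + m * (q - 1) ≤ q ^ m := by
      simpa using one_add_mul_le_pow (a := q - 1) (by linarith) m
    have hm : (0 : ℝ) ≤ m * (q - 1) := by have := m.cast_nonneg (α := ℝ); nlinarith
    nlinarith [mul_le_mul_of_nonneg_left hbern (by positivity : 0 ≤ κ * s),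
      mul_nonneg (mul_nonneg (sub_nonneg.2 hs) hκ.le) hm]
  calc ∑' m : ℕ, ENNReal.ofReal (Real.exp (-(κ * s * q ^ m)))
      ≤ ∑' m : ℕ, ENNReal.ofReal (Real.exp (-(κ * s)) * r ^ m) :=
        ENNReal.tsum_le_tsum fun m => ENNReal.ofReal_le_ofReal (hterm m)
    _ = ENNReal.ofReal (∑' m : ℕ, Real.exp (-(κ * s)) * r ^ m) :=
        (ENNReal.ofReal_tsum_of_nonneg (fun m => by positivity)
          ((summable_geometric_of_lt_one hr0 hr1).mul_left _)).symm
    _ = ENNReal.ofReal ((1 - r)⁻¹ * Real.exp (-(κ * s))) := by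
        rw [tsum_mul_left, tsum_geometric_of_lt_one hr0 hr1, mul_comm]

lemma exists_pos_lt_one_one_lt_sq_mul {a : ℝ} (ha : 1 < a) :
    ∃ ρ : ℝ, 0 < ρ ∧ ρ < 1 ∧ 1 < ρ ^ 2 * a := by
  have ha0 : 0 < a := by linarith
  refine ⟨(a + 1) / (2 * a), by positivity, by rw [div_lt_one (by positivity)]; linarith, ?_⟩
  rw [show ((a + 1) / (2 * a)) ^ 2 * a = (a + 1) ^ 2 / (4 * a) by field_simp; ring,
    one_lt_div (by positivity)]
  nlinarith [sq_pos_of_pos (sub_pos.2 ha)]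

lemma measurable_sum_range_randomIndex {Ω : Type*} {m : MeasurableSpace Ω} {N : Ω → ℕ}
    {X : ℕ → Ω → ℕ} (hN : Measurable[m] N) (hX : ∀ i, Measurable[m] (X i)) :
    Measurable[m] fun ω => ∑ i ∈ Finset.range (N ω), X i ω := by
  refine measurable_to_countable' fun n => ?_
  have hfib : (fun ω => ∑ i ∈ Finset.range (N ω), X i ω) ⁻¹' {n}
      = ⋃ k, N ⁻¹' {k} ∩ (fun ω => ∑ i ∈ Finset.range k, X i ω) ⁻¹' {n} := by
    ext ω; simp
  rw [hfib]
  exact .iUnion fun k => (hN (measurableSet_singleton k)).inter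
    (Finset.measurable_sum _ (fun i _ => hX i) (measurableSet_singleton n))

section GaltonWatson

variable {Ω : Type*} {Z1 : Ω → ℕ} {ξ : ℕ → ℕ → Ω → ℕ} {Z : ℕ → Ω → ℕ}

lemma measurable_generation {m : MeasurableSpace Ω} (hZone : Z 1 = Z1)
    (hZrec : ∀ t, 1 ≤ t → ∀ ω, Z (t + 1) ω = ∑ i ∈ Finset.range (Z t ω), ξ t i ω)
    {t : ℕ} (ht : 1 ≤ t) (hZ1 : Measurable[m] Z1)
    (hξ : ∀ u < t, ∀ i, Measurable[m] (ξ u i)) :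
    Measurable[m] (Z t) := by
  induction t, ht using Nat.le_induction with
  | base => exact hZone ▸ hZ1
  | succ u hu ih =>
    rw [funext (hZrec u hu)]
    exact measurable_sum_range_randomIndex (ih fun v hv => hξ v (by omega)) (hξ u (by omega))

variable [MeasurableSpace Ω] {μ : Measure Ω}

lemma indepFun_generation_sum_offspring (hZ1m : Measurable Z1)
    (hξm : ∀ t i, Measurable (ξ t i))
    (hindep : iIndepFun (fun o : Option (ℕ × ℕ) => o.elim Z1 (fun ti => ξ ti.1 ti.2)) μ)
    (hZone : Z 1 = Z1)
    (hZrec : ∀ t, 1 ≤ t → ∀ ω, Z (t + 1) ω = ∑ i ∈ Finset.range (Z t ω), ξ t i ω)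
    {t : ℕ} (ht : 1 ≤ t) (n : ℕ) :
    IndepFun (Z t) (fun ω => ∑ i ∈ Finset.range n, (ξ t i ω : ℝ)) μ := by
  set F := fun o : Option (ℕ × ℕ) => o.elim Z1 (fun ti => ξ ti.1 ti.2)
  set 𝓕 := fun o => MeasurableSpace.comap (F o) inferInstance
  have hle : ∀ o, 𝓕 o ≤ ‹_› := by
    rintro (_ | ⟨u, i⟩)
    exacts [hZ1m.comap_le, (hξm u i).comap_le]
  set past : Set (Option (ℕ × ℕ)) := {o | o.elim True (·.1 < t)}
  set present : Set (Option (ℕ × ℕ)) := {o | o.elim False (·.1 = t)}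
  have hdisj : Disjoint past present := by
    refine Set.disjoint_left.2 ?_
    rintro (_ | ⟨u, i⟩) h1 h2
    · exact h2
    · exact (ne_of_lt h1) h2
  have hmeas : ∀ (S : Set (Option (ℕ × ℕ))) o, o ∈ S → Measurable[⨆ o ∈ S, 𝓕 o] (F o) :=
    fun S o ho => Measurable.of_comap_le (le_iSup₂ (f := fun o (_ : o ∈ S) => 𝓕 o) o ho)
  rw [IndepFun_iff_Indep]
  refine indep_of_indep_of_le (indep_iSup_of_disjoint hle hindep.iIndep hdisj) ?_ ?_
  · exact (measurable_generation hZone hZrec ht (hmeas past none trivial)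
      fun u hu i => hmeas past (some (u, i)) hu).comap_le
  · exact (Finset.measurable_sum _ fun i _ =>
      Measurable.of_discrete.comp (hmeas present (some (t, i)) rfl)).comap_le

lemma measure_generation_jump_le [IsProbabilityMeasure μ] (hZ1m : Measurable Z1)
    (hξm : ∀ t i, Measurable (ξ t i))
    (hindep : iIndepFun (fun o : Option (ℕ × ℕ) => o.elim Z1 (fun ti => ξ ti.1 ti.2)) μ)
    (hZone : Z 1 = Z1)
    (hZrec : ∀ t, 1 ≤ t → ∀ ω, Z (t + 1) ω = ∑ i ∈ Finset.range (Z t ω), ξ t i ω)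
    {p : PMF ℕ} (hξlaw : ∀ t i, μ.map (ξ t i) = p.toMeasure) {c : ℕ} (hc : 0 < c)
    (hp : ∀ m, c < m → p m = 0) {a : ℝ} (hmean : ∑' m : ℕ, (m : ℝ) * (p m).toReal = a)
    {t : ℕ} (ht : 1 ≤ t) {x ε : ℝ} (hε : 0 < ε) :
    μ {ω | (Z t ω : ℝ) ≤ x ∧ a * Z t ω + ε < Z (t + 1) ω}
      ≤ ENNReal.ofReal (Real.exp (-2 * ε ^ 2 / (x * c ^ 2))) := by
  set S : ℕ → Ω → ℝ := fun n ω => ∑ i ∈ Finset.range n, (ξ t i ω : ℝ)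
  set A : ℕ → Set Ω := fun n => {ω | 0 < n ∧ (n : ℝ) ≤ x ∧ n * a + ε ≤ S n ω}
  have hsub :
      {ω | (Z t ω : ℝ) ≤ x ∧ a * Z t ω + ε < Z (t + 1) ω} ⊆ {ω | ω ∈ A (Z t ω)} := by
    rintro ω ⟨hle, hjump⟩
    rw [hZrec t ht ω, Nat.cast_sum] at hjump
    refine ⟨Nat.pos_of_ne_zero fun h0 => ?_, hle, by simp only [S]; linarith⟩
    simp only [h0, Finset.range_zero, Finset.sum_empty, Nat.cast_zero, mul_zero] at hjump
    linarith
  refine (measure_mono hsub).trans (measure_setOf_mem_fiber_le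
    (measurable_generation hZone hZrec ht hZ1m fun u _ i => hξm u i) fun n => ?_)
  by_cases hn : 0 < n ∧ (n : ℝ) ≤ x
  · have hoffspring : iIndepFun (ξ t) μ :=
      hindep.precomp (g := fun i => some (t, i)) fun i j h => by simpa using h
    have hhoeffding :=
      measureReal_sum_range_ge_le (hξm t) hoffspring (hξlaw t) hp hmean n hε.le
    have hexp : Real.exp (-2 * ε ^ 2 / (n * c ^ 2)) ≤ Real.exp (-2 * ε ^ 2 / (x * c ^ 2)) := by
      rw [Real.exp_le_exp, neg_mul, neg_div, neg_div, neg_le_neg_iff]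
      exact div_le_div_of_nonneg_left (by positivity) (by simp [hn.1, hc])
        (by gcongr; exact hn.2)
    calc μ (Z t ⁻¹' {n} ∩ A n) ≤ μ (Z t ⁻¹' {n} ∩ S n ⁻¹' Set.Ici (n * a + ε)) :=
          measure_mono (Set.inter_subset_inter_right _ fun ω h => h.2.2)
      _ = μ (Z t ⁻¹' {n}) * μ (S n ⁻¹' Set.Ici (n * a + ε)) :=
          (indepFun_generation_sum_offspring hZ1m hξm hindep hZone hZrec ht n
            ).measure_inter_preimage_eq_mul _ _ (measurableSet_singleton n) measurableSet_Ici
      _ ≤ μ (Z t ⁻¹' {n}) * ENNReal.ofReal (Real.exp (-2 * ε ^ 2 / (x * c ^ 2))) := by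
          gcongr
          rw [← ofReal_measureReal]
          exact ENNReal.ofReal_le_ofReal (hhoeffding.trans hexp)
  · have hempty : A n = ∅ := Set.eq_empty_of_forall_notMem fun ω h => hn ⟨h.1, h.2.1⟩
    simp [hempty]

lemma measure_exists_generation_gt_le [IsProbabilityMeasure μ] (hZ1m : Measurable Z1)
    (hξm : ∀ t i, Measurable (ξ t i))
    (hindep : iIndepFun (fun o : Option (ℕ × ℕ) => o.elim Z1 (fun ti => ξ ti.1 ti.2)) μ)
    (hZone : Z 1 = Z1)
    (hZrec : ∀ t, 1 ≤ t → ∀ ω, Z (t + 1) ω = ∑ i ∈ Finset.range (Z t ω), ξ t i ω)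
    {p : PMF ℕ} (hξlaw : ∀ t i, μ.map (ξ t i) = p.toMeasure) {c : ℕ} (hc : 0 < c)
    (hp : ∀ m, c < m → p m = 0) {a : ℝ} (hmean : ∑' m : ℕ, (m : ℝ) * (p m).toReal = a)
    (ha : 1 ≤ a) (hZ1 : ∀ᵐ ω ∂μ, Z1 ω ≤ c) {ρ s : ℝ} (hρ0 : 0 < ρ) (hρ1 : ρ < 1)
    (hs : c + 1 ≤ s) :
    μ {ω | ∃ k, 1 ≤ k ∧ a ^ k * s < Z k ω}
      ≤ ∑' m : ℕ, ENNReal.ofReal (Real.exp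
          (-(2 * ((1 - ρ) / (c + 1)) ^ 2 * a ^ 3 / c ^ 2 * s * (ρ ^ 2 * a) ^ m))) := by
  set δ : ℕ → ℝ := fun m => (1 - ρ) / (c + 1) * ρ ^ m
  have hδ : ∀ m, 0 < δ m := fun m => by
    have : 0 < 1 - ρ := by linarith
    positivity
  have hD : ∀ m, ∑ j ∈ Finset.range m, δ j ≤ 1 / (c + 1) := fun m => calc
    _ = (1 - ρ) / (c + 1) * ∑ j ∈ Finset.Ico 0 m, ρ ^ j := by
      rw [Finset.mul_sum, Finset.range_eq_Ico]
    _ ≤ (1 - ρ) / (c + 1) * (ρ ^ 0 / (1 - ρ)) :=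
      mul_le_mul_of_nonneg_left (geom_sum_Ico_le_of_lt_one hρ0.le hρ1)
        (div_nonneg (by linarith) (by positivity))
    _ = 1 / (c + 1) := by field_simp [(by linarith : 1 - ρ ≠ 0)]
  have hKD : (c : ℝ) + a * s * (1 / (c + 1)) ≤ a * s := by
    have : a * s / (c + 1) ≤ a * s - c := by
      rw [div_le_iff₀ (by positivity)]
      nlinarith [mul_nonneg (Nat.cast_nonneg (α := ℝ) c) (sub_nonneg.2 hs),
        mul_le_mul_of_nonneg_right ha (by linarith : (0 : ℝ) ≤ s)]
    linarith [mul_one_div (a * s) ((c : ℝ) + 1)]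
  set B : ℕ → Set Ω := fun m => {ω | (Z (m + 1) ω : ℝ) ≤ a ^ (m + 1) * s ∧
    a * Z (m + 1) ω + δ m * a ^ (m + 2) * s < Z (m + 1 + 1) ω}
  have hsub : {ω | ∃ k, 1 ≤ k ∧ a ^ k * s < Z k ω} ⊆ {ω | c < Z1 ω} ∪ ⋃ m, B m := by
    rintro ω ⟨k, hk, hgt⟩
    by_contra hgood
    simp only [Set.mem_union, Set.mem_iUnion, not_or, not_exists, Set.mem_ofPred_eq, not_lt,
      not_and, B] at hgood
    obtain ⟨m, rfl⟩ : ∃ m, k = m + 1 := ⟨k - 1, by omega⟩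
    refine hgt.not_ge (le_pow_mul_of_increments_le (y := fun m => (Z (m + 1) ω : ℝ))
      (by linarith) (by linarith) hD hKD ?_ hgood.2 m)
    simpa [hZone] using hgood.1
  have hZ1null : μ {ω | c < Z1 ω} = 0 := by simpa [ae_iff] using hZ1
  calc μ {ω | ∃ k, 1 ≤ k ∧ a ^ k * s < Z k ω}
      ≤ μ {ω | c < Z1 ω} + μ (⋃ m, B m) := (measure_mono hsub).trans (measure_union_le _ _)
    _ ≤ ∑' m, μ (B m) := by rw [hZ1null, zero_add]; exact measure_iUnion_le _
    _ ≤ _ := ENNReal.tsum_le_tsum fun m => by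
      refine (measure_generation_jump_le hZ1m hξm hindep hZone hZrec hξlaw hc hp hmean
        (by omega) (mul_pos (mul_pos (hδ m) (by positivity)) (by linarith))).trans_eq ?_
      congr 2
      simp only [δ]
      field_simp
      ring

end GaltonWatson

theorem stmt9_general
    {Ω : Type*} [MeasurableSpace Ω] (μ : Measure Ω)
    [IsProbabilityMeasure μ]
    (kmin kmax : ℕ) (hkk : kmin < kmax)
    (P Pbar : PMF ℕ)
    (hPsupp : ∀ k, P k ≠ 0 → k ∈ Finset.Icc kmin kmax)
    (b : ℝ)
    (hPbar : ∀ k : ℕ, (Pbar k).toReal = ((k : ℝ) + 1) * (P (k + 1)).toReal / b)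
    (a : ℝ) (ha : a = ∑' k : ℕ, (k : ℝ) * (Pbar k).toReal) (ha1 : 1 < a)
    (Z1 : Ω → ℕ) (ξ : ℕ → ℕ → Ω → ℕ)
    (hZ1m : Measurable Z1) (hξm : ∀ t i, Measurable (ξ t i))
    (hZ1law : μ.map Z1 = P.toMeasure)
    (hξlaw : ∀ t i, μ.map (ξ t i) = Pbar.toMeasure)
    (hindep : iIndepFun
      (fun o : Option (ℕ × ℕ) => o.elim Z1 (fun ti => ξ ti.1 ti.2)) μ)
    (Z : ℕ → Ω → ℕ) (hZone : Z 1 = Z1)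
    (hZrec : ∀ t, 1 ≤ t → ∀ ω, Z (t + 1) ω = ∑ i ∈ Finset.range (Z t ω), ξ t i ω)
    : ∃ c₀ c₁ : ℝ, 0 < c₀ ∧ 0 < c₁ ∧ ∀ s : ℝ, (kmax : ℝ) + 1 ≤ s →
      1 - c₀ * Real.exp (-(c₁ * s)) ≤
        (μ {ω | ∀ k : ℕ, 1 ≤ k → (Z k ω : ℝ) ≤ a ^ k * s}).toReal := by
  have hP : ∀ m, kmax < m → P m = 0 := fun m hm => by
    by_contra h
    have := Finset.mem_Icc.1 (hPsupp m h)
    omega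
  have hkmax : (0 : ℝ) < kmax := by exact_mod_cast (by omega : 0 < kmax)
  obtain ⟨ρ, hρ0, hρ1, hq⟩ := exists_pos_lt_one_one_lt_sq_mul ha1
  set κ := 2 * ((1 - ρ) / (kmax + 1)) ^ 2 * a ^ 3 / kmax ^ 2
  have hκ : 0 < κ := by
    have : 0 < 1 - ρ := by linarith
    positivity
  set c₀ := (1 - Real.exp (-(κ * (ρ ^ 2 * a - 1))))⁻¹
  have hc₀ : 0 < c₀ := inv_pos.2 (sub_pos.2 (Real.exp_lt_one_iff.2 (by nlinarith)))
  refine ⟨c₀, κ, hc₀, hκ, fun s hs => one_sub_le_measureReal (by positivity) ?_⟩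
  have hbad : {ω | ∀ k : ℕ, 1 ≤ k → (Z k ω : ℝ) ≤ a ^ k * s}ᶜ
      = {ω | ∃ k, 1 ≤ k ∧ a ^ k * s < Z k ω} := by
    ext ω
    simp
  rw [hbad]
  exact (measure_exists_generation_gt_le hZ1m hξm hindep hZone hZrec hξlaw (by omega)
    (PMF.apply_eq_zero_of_sizeBiased hPbar hP) ha.symm ha1.le
    (ae_le_of_map_eq_toMeasure hZ1m hZ1law hP) hρ0 hρ1 hs).trans
    (tsum_ofReal_exp_neg_mul_pow_le hκ hq (by linarith))

/-- For the unimodular Galton–Watson process with generation sizes Z_t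
(root law P on {k_min,…,k_max}, 2 ≤ k_min < k_max, later offspring law P̄
supported on {k_min−1,…,k_max−1}, a = E[P̄] > 1), there are constants
c₀, c₁ > 0 such that for every s ≥ k_max + 1,
P(Z_k ≤ a^k·s for all k) ≥ 1 − c₀·exp(−c₁·s). -/
theorem stmt9
    {Ω : Type*} [MeasurableSpace Ω] (μ : Measure Ω)
    [IsProbabilityMeasure μ]
    (kmin kmax : ℕ) (h2 : 2 ≤ kmin) (hkk : kmin < kmax)
    (P Pbar : PMF ℕ)
    (hPsupp : ∀ k, P k ≠ 0 → k ∈ Finset.Icc kmin kmax)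
    (b : ℝ) (hb : b = ∑' k : ℕ, (k : ℝ) * (P k).toReal)
    (hPbar : ∀ k : ℕ, (Pbar k).toReal = ((k : ℝ) + 1) * (P (k + 1)).toReal / b)
    (a : ℝ) (ha : a = ∑' k : ℕ, (k : ℝ) * (Pbar k).toReal) (ha1 : 1 < a)
    (Z1 : Ω → ℕ) (ξ : ℕ → ℕ → Ω → ℕ)
    (hZ1m : Measurable Z1) (hξm : ∀ t i, Measurable (ξ t i))
    (hZ1law : μ.map Z1 = P.toMeasure)
    (hξlaw : ∀ t i, μ.map (ξ t i) = Pbar.toMeasure)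
    (hindep : iIndepFun
      (fun o : Option (ℕ × ℕ) => o.elim Z1 (fun ti => ξ ti.1 ti.2)) μ)
    (Z : ℕ → Ω → ℕ) (hZone : Z 1 = Z1)
    (hZrec : ∀ t, 1 ≤ t → ∀ ω, Z (t + 1) ω = ∑ i ∈ Finset.range (Z t ω), ξ t i ω)
    : ∃ c₀ c₁ : ℝ, 0 < c₀ ∧ 0 < c₁ ∧ ∀ s : ℝ, (kmax : ℝ) + 1 ≤ s →
      1 - c₀ * Real.exp (-(c₁ * s)) ≤
        (μ {ω | ∀ k : ℕ, 1 ≤ k → (Z k ω : ℝ) ≤ a ^ k * s}).toReal :=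
  stmt9_general μ kmin kmax hkk P Pbar hPsupp b hPbar a ha ha1 Z1 ξ hZ1m hξm hZ1law hξlaw hindep Z
    hZone hZrec
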